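/- arXiv:1507.00944 — 4 statements merged into one kernel-verified Lean document; each statement's English description precedes it below -/
import Mathlib

section
/- Let R be a commutative ring of prime characteristic p, x ∈ R, and M an R-module with an additive map κ : M → M satisfying κ(r^p m) = r κ(m). Equip the localization M_x with the map κ(m/s) = κ(m s^{p-1})/s. Then this map is well-defined (independent of the chosen fraction representation when x is a nonzerodivisor on M, or in general well-defined on the localization) and again satisfies κ((a)^p · μ) = a · κ(μ) for all a ∈ R_x and μ ∈ M_x. -/
/-!
By `p⁻¹`-semilinearity, replacing the representative `(m, s)` by `(t m, t s)` multiplies the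
numerator `κ(s^{p-1} m)` by `t` (the factor `t^p` comes out as `t`), so `κ(s^{p-1} m)/s` is
unchanged. This scaling invariance gives well-definedness, since equivalent fractions have a
common rescaling, and additivity, after bringing two fractions to the common denominator `s t`.
For `a = r/t`, the fraction `a^p (m/s) = r^p m / t^p s` has numerator
`κ((r t^{p-1})^p s^{p-1} m) = r t^{p-1} κ(s^{p-1} m)`, and cancelling `t^{p-1}` leaves `a κ(m/s)`.
-/

namespace LocalizedModule

section Cartier

variable {R M : Type*} [CommSemiring R] [AddCommMonoid M] [Module R M] (S : Submonoid R)

def cartierMk (p : ℕ) (κ : M → M) (y : M × S) : LocalizedModule S M :=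
  mk (κ ((y.2 : R) ^ (p - 1) • y.1)) y.2

variable {S} {p : ℕ} {κ : M → M}

theorem cartierMk_smul_mul (hp : 0 < p) (hsemi : ∀ (r : R) (m : M), κ (r ^ p • m) = r • κ m)
    (t s : S) (m : M) : cartierMk S p κ (t • m, t * s) = cartierMk S p κ (m, s) := by
  have hnum : κ (((t * s : S) : R) ^ (p - 1) • t • m) = t • κ ((s : R) ^ (p - 1) • m) := by
    rw [Submonoid.smul_def, smul_smul, Submonoid.coe_mul, mul_pow, mul_assoc,
      mul_comm _ (t : R), ← mul_assoc, pow_sub_one_mul hp.ne', mul_smul, hsemi,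
      Submonoid.smul_def]
  simp only [cartierMk, hnum, mk_cancel_common_left]

theorem cartierMk_congr (hp : 0 < p) (hsemi : ∀ (r : R) (m : M), κ (r ^ p • m) = r • κ m)
    (y y' : M × S) (h : y ≈ y') : cartierMk S p κ y = cartierMk S p κ y' := by
  obtain ⟨m, s⟩ := y
  obtain ⟨m', s'⟩ := y'
  obtain ⟨u, hu⟩ := h
  calc cartierMk S p κ (m, s)
      = cartierMk S p κ ((u * s') • m, u * s' * s) := (cartierMk_smul_mul hp hsemi _ _ _).symm
    _ = cartierMk S p κ ((u * s) • m', u * s * s') := by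
        simp only [mul_smul, mul_right_comm u s' s]
        exact congrArg _ (Prod.ext hu rfl)
    _ = cartierMk S p κ (m', s') := cartierMk_smul_mul hp hsemi _ _ _

def cartier (hp : 0 < p) (hsemi : ∀ (r : R) (m : M), κ (r ^ p • m) = r • κ m)
    (μ : LocalizedModule S M) : LocalizedModule S M :=
  μ.liftOn (cartierMk S p κ) (cartierMk_congr hp hsemi)

variable (hp : 0 < p) (hsemi : ∀ (r : R) (m : M), κ (r ^ p • m) = r • κ m)

theorem cartier_mk (m : M) (s : S) :
    cartier hp hsemi (mk m s) = mk (κ ((s : R) ^ (p - 1) • m)) s :=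
  liftOn_mk _ m s

theorem cartier_add (hadd : ∀ a b : M, κ (a + b) = κ a + κ b) (μ ν : LocalizedModule S M) :
    cartier hp hsemi (μ + ν) = cartier hp hsemi μ + cartier hp hsemi ν := by
  induction μ, ν using induction_on₂ with
  | h m n s t =>
    have hsplit : cartier hp hsemi (mk (t • m + s • n) (s * t)) =
        cartierMk S p κ (t • m, t * s) + cartierMk S p κ (s • n, s * t) := by
      rw [cartier_mk, smul_add, hadd, mul_comm t s, mk, ← OreLocalization.add_oreDiv]
      rfl
    rw [mk_add_mk, hsplit, cartierMk_smul_mul hp hsemi, cartierMk_smul_mul hp hsemi,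
      cartier_mk, cartier_mk]
    rfl

theorem cartier_pow_smul (a : Localization S) (μ : LocalizedModule S M) :
    cartier hp hsemi (a ^ p • μ) = a • cartier hp hsemi μ := by
  induction μ with
  | h m s =>
    induction a using Localization.induction_on with
    | H y =>
      obtain ⟨r, t⟩ := y
      have hnum : κ (((t ^ p * s : S) : R) ^ (p - 1) • r ^ p • m) =
          t ^ (p - 1) • r • κ ((s : R) ^ (p - 1) • m) := by
        rw [Submonoid.smul_def, ← hsemi, ← hsemi]
        simp only [smul_smul]
        congr 2
        simp only [Submonoid.coe_mul, SubmonoidClass.coe_pow]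
        ring
      have hden : t ^ p * s = t ^ (p - 1) * (t * s) := by
        rw [← mul_assoc, pow_sub_one_mul hp.ne']
      rw [Localization.mk_pow, mk_smul_mk, cartier_mk, hnum, cartier_mk, mk_smul_mk, hden,
        mk_cancel_common_left]

end Cartier

end LocalizedModule

theorem stmt_2_general {R M : Type*} [CommRing R] [AddCommGroup M] [Module R M]
    (p : ℕ) (hp : p.Prime) (x : R)
    (κ : M → M) (hadd : ∀ a b : M, κ (a + b) = κ a + κ b)
    (hsemi : ∀ (r : R) (m : M), κ (r ^ p • m) = r • κ m) :
    ∃ κ' : LocalizedModule (Submonoid.powers x) M → LocalizedModule (Submonoid.powers x) M,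
      (∀ a b, κ' (a + b) = κ' a + κ' b) ∧
      (∀ (m : M) (s : Submonoid.powers x),
        κ' (LocalizedModule.mk m s) = LocalizedModule.mk (κ ((s : R) ^ (p - 1) • m)) s) ∧
      (∀ (a : Localization (Submonoid.powers x))
        (μ : LocalizedModule (Submonoid.powers x) M),
        κ' (a ^ p • μ) = a • κ' μ) :=
  ⟨LocalizedModule.cartier hp.pos hsemi, LocalizedModule.cartier_add hp.pos hsemi hadd,
    LocalizedModule.cartier_mk hp.pos hsemi, LocalizedModule.cartier_pow_smul hp.pos hsemi⟩

/-- The Cartier structure `κ(m/s) = κ(s^{p-1} m)/s` on the localization `M_x` is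
well defined, additive, and `p⁻¹`-semilinear over `R_x`. -/
theorem stmt_2 {R M : Type*} [CommRing R] [AddCommGroup M] [Module R M]
    (p : ℕ) (hp : p.Prime) (hchar : (p : R) = 0) (x : R)
    (κ : M → M) (hadd : ∀ a b : M, κ (a + b) = κ a + κ b)
    (hsemi : ∀ (r : R) (m : M), κ (r ^ p • m) = r • κ m) :
    ∃ κ' : LocalizedModule (Submonoid.powers x) M → LocalizedModule (Submonoid.powers x) M,
      (∀ a b, κ' (a + b) = κ' a + κ' b) ∧
      (∀ (m : M) (s : Submonoid.powers x),
        κ' (LocalizedModule.mk m s) = LocalizedModule.mk (κ ((s : R) ^ (p - 1) • m)) s) ∧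
      (∀ (a : Localization (Submonoid.powers x))
        (μ : LocalizedModule (Submonoid.powers x) M),
        κ' (a ^ p • μ) = a • κ' μ) :=
  stmt_2_general p hp x κ hadd hsemi
end

section
/- Let R be a commutative ring, n ≥ 1, x ∈ R, and S = R[t]/(t^n − x). Then S is a free R-module with basis 1, t, …, t^{n−1}. Moreover, the R-linear map Hom_R(S, R) → S sending δ_{n−1} ↦ 1 (where δ_i(t^j) = 1 if i = j and 0 otherwise, for 0 ≤ i, j ≤ n−1) is an isomorphism of S-modules; explicitly, t^i · δ_{n−1} = δ_{n−1−i} for 0 ≤ i ≤ n−1, where (t^i·φ)(s) := φ(t^i s). -/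
open Polynomial

/-- For `S = R[t]/(t^n - x)`: `S` is free over `R` with basis `1, t, …, t^{n-1}`;
with `δ_i` the dual basis, one has `t^i · δ_{n-1} = δ_{n-1-i}` for `0 ≤ i ≤ n-1`,
and `s ↦ s · δ_{n-1}` (i.e. `s ↦ δ_{n-1} ∘ (s · -)`) is an isomorphism
`S ≅ Hom_R(S, R)` of `S`-modules. -/
theorem stmt_5 {R : Type*} [CommRing R] (n : ℕ) (hn : 0 < n) (x : R) :
    ∃ b : Module.Basis (Fin n) R (AdjoinRoot (X ^ n - C x)),
      (∀ i : Fin n, b i = (AdjoinRoot.root (X ^ n - C x)) ^ (i : ℕ)) ∧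
      (∀ (i : Fin n) (u : AdjoinRoot (X ^ n - C x)),
        b.coord ⟨n - 1, by omega⟩ ((AdjoinRoot.root (X ^ n - C x)) ^ (i : ℕ) * u) =
          b.coord ⟨n - 1 - (i : ℕ), by omega⟩ u) ∧
      Function.Bijective (fun s : AdjoinRoot (X ^ n - C x : R[X]) =>
        (b.coord ⟨n - 1, by omega⟩).comp (LinearMap.mulLeft R s)) := by
  rcases subsingleton_or_nontrivial R with hR | hR
  · -- trivial ring case
    haveI : Subsingleton (AdjoinRoot (X ^ n - C x)) := Module.subsingleton R _
    haveI : Subsingleton (Fin n →₀ R) := ⟨fun a b => Finsupp.ext fun _ => Subsingleton.elim _ _⟩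
    refine ⟨Module.Basis.ofRepr (LinearEquiv.ofSubsingleton _ _), ?_, ?_, ?_, ?_⟩
    · intro i; exact Subsingleton.elim _ _
    · intro i u; exact Subsingleton.elim _ _
    · intro a b _; exact Subsingleton.elim _ _
    · intro φ; exact ⟨0, Subsingleton.elim _ _⟩
  · set f : R[X] := X ^ n - C x with hf
    have hmon : f.Monic := monic_X_pow_sub_C x hn.ne'
    set pb := AdjoinRoot.powerBasis' hmon with hpb
    have hd : pb.dim = n := natDegree_X_pow_sub_C
    set t := AdjoinRoot.root f with htdef
    set b : Module.Basis (Fin n) R (AdjoinRoot f) := pb.basis.reindex (finCongr hd) with hb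
    have hbe : ∀ i : Fin n, b i = t ^ (i : ℕ) := by
      intro i
      rw [hb, Module.Basis.reindex_apply, PowerBasis.coe_basis]
      simp [hpb, htdef]
    have ht : t ^ n = algebraMap R (AdjoinRoot f) x := by
      have h0 : AdjoinRoot.mk f f = 0 := AdjoinRoot.mk_self
      rw [hf] at h0
      rw [map_sub, map_pow, AdjoinRoot.mk_X, AdjoinRoot.mk_C, sub_eq_zero] at h0
      exact h0
    -- repr of basis powers
    have hrep : ∀ m j : Fin n, b.repr (t ^ (m : ℕ)) j = if m = j then 1 else 0 := by
      intro m j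
      rw [← hbe m, b.repr_self, Finsupp.single_apply]
    set k : Fin n := ⟨n - 1, by omega⟩ with hk
    set σ : Fin n → Fin n := fun m => ⟨n - 1 - (m : ℕ), by omega⟩ with hσ
    -- key property
    have h2 : ∀ (i : Fin n) (u : AdjoinRoot f),
        b.repr (t ^ (i : ℕ) * u) k = b.repr u (σ i) := by
      intro i
      suffices h : (b.coord k).comp (LinearMap.mulLeft R (t ^ (i : ℕ))) = b.coord (σ i) by
        intro u
        simpa using LinearMap.congr_fun h u
      apply b.ext
      intro j
      simp only [LinearMap.comp_apply, LinearMap.mulLeft_apply, Module.Basis.coord_apply, hbe j,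
        ← pow_add]
      rw [hrep]
      by_cases hij : (i : ℕ) + (j : ℕ) < n
      · rw [show t ^ ((i : ℕ) + (j : ℕ)) = t ^ ((⟨(i : ℕ) + (j : ℕ), hij⟩ : Fin n) : ℕ) from rfl,
          hrep]
        simp only [hk, hσ, Fin.ext_iff]
        by_cases h : (i : ℕ) + (j : ℕ) = n - 1
        · rw [if_pos h, if_pos (by omega)]
        · rw [if_neg h, if_neg (by omega)]
      · push_neg at hij
        have hij2 : (i : ℕ) + (j : ℕ) = n + ((i : ℕ) + (j : ℕ) - n) := by omega
        have hlt : (i : ℕ) + (j : ℕ) - n < n := by omega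
        rw [hij2, pow_add, ht, ← Algebra.smul_def, map_smul, Finsupp.smul_apply,
          show t ^ ((i : ℕ) + (j : ℕ) - n)
            = t ^ ((⟨(i : ℕ) + (j : ℕ) - n, hlt⟩ : Fin n) : ℕ) from rfl, hrep]
        simp only [hk, hσ, Fin.ext_iff]
        rw [if_neg (by omega), if_neg (by omega), smul_zero]
    have hσσ : ∀ m : Fin n, σ (σ m) = m := by
      intro m; simp only [hσ, Fin.ext_iff]; omega
    refine ⟨b, hbe, fun i u => h2 i u, ?_, ?_⟩
    · -- injective
      intro s s' h
      have key : ∀ j : Fin n, b.repr s j = b.repr s' j := by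
        intro j
        have hm := LinearMap.congr_fun h (b (σ j))
        simp only [LinearMap.comp_apply, LinearMap.mulLeft_apply, Module.Basis.coord_apply,
          hbe (σ j)] at hm
        rw [mul_comm s, mul_comm s', h2 (σ j) s, h2 (σ j) s', hσσ j] at hm
        exact hm
      exact b.repr.injective (Finsupp.ext key)
    · -- surjective
      intro φ
      refine ⟨∑ m : Fin n, φ (b (σ m)) • b m, ?_⟩
      have hrs : ∀ j : Fin n, b.repr (∑ m : Fin n, φ (b (σ m)) • b m) j = φ (b (σ j)) := by
        intro j
        rw [b.repr_sum_self]
      apply b.ext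
      intro m
      simp only [LinearMap.comp_apply, LinearMap.mulLeft_apply, Module.Basis.coord_apply]
      rw [hbe m, mul_comm, h2 m, hrs (σ m), hσσ m, hbe m]
end

section
/- Let f : R → S be a finite ring homomorphism (S module-finite over R), let T be a flat R-algebra, and let M be an R-module with S finitely presented over R. Then the natural map Hom_R(S, M) ⊗_R T → Hom_T(S ⊗_R T, M ⊗_R T), φ ⊗ u ↦ (s ⊗ v ↦ φ(s) ⊗ uv), is an isomorphism. Moreover, if R, S, T have characteristic p, M carries a Cartier structure κ, and we endow both sides with the induced Cartier structures (φ ↦ κ∘φ∘F on Hom's, and the localization/base-change structure on tensor factors when T is étale over R), then for T étale over R this isomorphism intertwines the Cartier structures. -/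
/-!
For `S` finitely presented and `T` flat over `R`, `Hom_R(S, M)` commutes with base change to `T`
(`Module.FinitePresentation.isBaseChange_map`: both sides are left exact in `S`, and the map is an
isomorphism for finite free `S`). Under this isomorphism `u ⊗ φ` acts as `u • φ.baseChange T`, and
the Cartier compatibility is an identity between two additive functions of `a ∈ T ⊗[R] S` (the
Frobenius of `T ⊗[R] S` is additive since `p = 0` there), so it suffices to check it on pure
tensors, where it is `hκT`.
-/

open TensorProduct

universe u

theorem add_pow_prime_of_natCast_eq_zero {A : Type*} [CommSemiring A] {p : ℕ} (hp : p.Prime)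
    (hchar : (p : A) = 0) (x y : A) : (x + y) ^ p = x ^ p + y ^ p := by
  obtain ⟨r, hr⟩ := exists_add_pow_prime_eq hp x y
  simpa [hchar] using hr

section Cartier

variable {R T S M : Type*} [CommRing R] [CommRing T] [CommRing S] [Algebra R S] [Algebra R T]
  [AddCommGroup M] [Module R M]

theorem LinearMap.smul_baseChange_apply_of_cartier {p : ℕ} (hp : p.Prime) (hchar : (p : R) = 0)
    (κ : M → M) (κT : T ⊗[R] M → T ⊗[R] M) (hκTadd : ∀ a b, κT (a + b) = κT a + κT b)
    (hκT : ∀ (u : T) (m : M), κT ((u ^ p) ⊗ₜ[R] m) = u ⊗ₜ[R] κ m)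
    {φ ψ : S →ₗ[R] M} (hψ : ∀ s, ψ s = κ (φ (s ^ p))) (u : T) (a : T ⊗[R] S) :
    (u • ψ.baseChange T) a = κT ((u ^ p • φ.baseChange T) (a ^ p)) := by
  let κT' : T ⊗[R] M →+ T ⊗[R] M := AddMonoidHom.mk' κT hκTadd
  have hcharTS : (p : T ⊗[R] S) = 0 := by
    rw [← map_natCast (algebraMap R (T ⊗[R] S)), hchar, map_zero]
  induction a using TensorProduct.induction_on with
  | zero =>
    have hκT0 : κT 0 = 0 := map_zero κT'
    simp [zero_pow hp.ne_zero, hκT0]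
  | tmul v s =>
    simp only [LinearMap.smul_apply, Algebra.TensorProduct.tmul_pow, LinearMap.baseChange_tmul,
      smul_tmul', smul_eq_mul, ← mul_pow, hκT, hψ]
  | add a b ha hb =>
    rw [add_pow_prime_of_natCast_eq_zero hp hcharTS, map_add, map_add, ha, hb]
    exact (map_add κT' _ _).symm

end Cartier

theorem stmt_15_general {R T : Type u} {S M : Type*} [CommRing R] [CommRing S] [CommRing T]
    [Algebra R S] [Algebra R T] [AddCommGroup M] [Module R M]
    (hfp : Module.FinitePresentation R S)
    (hflat : Module.Flat R T)
    (p : ℕ) (hp : p.Prime) (hchar : (p : R) = 0)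
    (κ : M → M)
    (Θ : (S →ₗ[R] M) → (S →ₗ[R] M))
    (hΘ : ∀ (φ : S →ₗ[R] M) (s : S), Θ φ s = κ (φ (s ^ p)))
    (κT : T ⊗[R] M → T ⊗[R] M)
    (hκTadd : ∀ a b : T ⊗[R] M, κT (a + b) = κT a + κT b)
    (hκT : ∀ (u : T) (m : M), κT ((u ^ p) ⊗ₜ[R] m) = u ⊗ₜ[R] κ m) :
    ∃ e : (T ⊗[R] (S →ₗ[R] M)) ≃ₗ[T] ((T ⊗[R] S) →ₗ[T] (T ⊗[R] M)),
      (∀ (u : T) (φ : S →ₗ[R] M) (v : T) (s : S),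
        e (u ⊗ₜ[R] φ) (v ⊗ₜ[R] s) = (u * v) ⊗ₜ[R] φ s) ∧
      (∀ (u : T) (φ : S →ₗ[R] M) (a : T ⊗[R] S),
        e (u ⊗ₜ[R] Θ φ) a = κT (e ((u ^ p) ⊗ₜ[R] φ) (a ^ p))) := by
  have hbc := Module.FinitePresentation.isBaseChange_map R S M T
  refine ⟨hbc.equiv, fun u φ v s => ?_, fun u φ a => ?_⟩
  · simp [hbc.equiv_tmul, smul_tmul', smul_eq_mul]
  · rw [hbc.equiv_tmul, hbc.equiv_tmul]
    exact LinearMap.smul_baseChange_apply_of_cartier hp hchar κ κT hκTadd hκT (hΘ φ) u a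

/-- Flat base change for Hom: for `S` a finitely presented (finite) `R`-module and
`T` flat over `R`, `Hom_R(S,M) ⊗_R T ≃ Hom_T(S ⊗_R T, M ⊗_R T)` via
`φ ⊗ u ↦ (s ⊗ v ↦ φ(s) ⊗ uv)`; and when `T` is étale over `R` in characteristic `p`
this isomorphism intertwines the induced Cartier structures. -/
theorem stmt_15 {R T : Type u} {S M : Type*} [CommRing R] [CommRing S] [CommRing T]
    [Algebra R S] [Algebra R T] [AddCommGroup M] [Module R M]
    (hfin : Module.Finite R S) (hfp : Module.FinitePresentation R S)
    (hflat : Module.Flat R T)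
    (p : ℕ) (hp : p.Prime) (hchar : (p : R) = 0)
    (het : Algebra.Etale R T)
    (κ : M → M) (hκadd : ∀ a b : M, κ (a + b) = κ a + κ b)
    (hκsemi : ∀ (r : R) (m : M), κ (r ^ p • m) = r • κ m)
    (Θ : (S →ₗ[R] M) → (S →ₗ[R] M))
    (hΘ : ∀ (φ : S →ₗ[R] M) (s : S), Θ φ s = κ (φ (s ^ p)))
    (κT : T ⊗[R] M → T ⊗[R] M)
    (hκTadd : ∀ a b : T ⊗[R] M, κT (a + b) = κT a + κT b)
    (hκT : ∀ (u : T) (m : M), κT ((u ^ p) ⊗ₜ[R] m) = u ⊗ₜ[R] κ m) :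
    ∃ e : (T ⊗[R] (S →ₗ[R] M)) ≃ₗ[T] ((T ⊗[R] S) →ₗ[T] (T ⊗[R] M)),
      (∀ (u : T) (φ : S →ₗ[R] M) (v : T) (s : S),
        e (u ⊗ₜ[R] φ) (v ⊗ₜ[R] s) = (u * v) ⊗ₜ[R] φ s) ∧
      (∀ (u : T) (φ : S →ₗ[R] M) (a : T ⊗[R] S),
        e (u ⊗ₜ[R] Θ φ) a = κT (e ((u ^ p) ⊗ₜ[R] φ) (a ^ p))) :=
  stmt_15_general hfp hflat p hp hchar κ Θ hΘ κT hκTadd hκT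
end

section
/- Let k be a field of characteristic p, R = k[x₁, …, x_n], and let κ : R → R be the additive map defined on monomials by κ(x₁^{a₁}⋯x_n^{a_n}) = x₁^{(a₁+1)/p − 1}⋯x_n^{(a_n+1)/p − 1} when all (a_i + 1) are divisible by p, and 0 otherwise (extended p^{-1}-semilinearly over k when k is perfect; over 𝔽_p extended additively). Fix 0 ≤ s ≤ p−2 and consider the twisted operator κ_s(m) = κ(x₁^s m). Then for every nonzero monomial g = x₁^{e₁}⋯x_n^{e_n} there exist e ≥ 1 and a monomial m such that κ_s^{e}(m·g) = 1. (In contrast, for s = p−1 one has κ_{p−1}^e(R·x₁) ⊆ x₁·R for all e, so no such m exists with g = x₁.) -/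
/-!
Write `𝟙 = socleExp σ p` for the exponent `(p-1,…,p-1)`. A monomial is sent to a nonzero
element by `κ` exactly when its exponent is `p • c + 𝟙`, and then to `x^c`; hence
`κ (x^{p • c} f) = x^c κ f`.
For the first part put `u = 𝟙 - s • e₁`, so that `x₁^s x^u = x^𝟙`, and
`A e = (1 + p + ⋯ + p^{e-1}) • u`. Then `A (e+1) = p • A e + u`, so
`κ_s (x^{A (e+1)}) = x^{A e}` and `κ_s^e (x^{A e}) = 1`. Since `s ≤ p - 2`, every entry of `u`
is positive, so `A e ≥ e` entrywise and `A e` is eventually a multiple of any given monomial.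
For the second part, `κ_{p-1}(x₁ h) = κ(x₁^p h) = x₁ κ h`.
-/

open MvPolynomial Finset

variable {σ R : Type*}

lemma le_geomSum_smul {p : ℕ} (hp : 0 < p) {u : σ →₀ ℕ} (hu : ∀ i, 1 ≤ u i) (g : σ →₀ ℕ) :
    g ≤ (∑ j ∈ range (g.degree + 1), p ^ j) • u := fun i => by
  have hgeom : g.degree + 1 ≤ ∑ j ∈ range (g.degree + 1), p ^ j := by
    simpa using Finset.card_nsmul_le_sum (range (g.degree + 1)) (p ^ ·) 1
      fun j _ => Nat.one_le_pow j p hp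
  calc g i ≤ g.degree := Finsupp.le_degree i g
    _ ≤ (∑ j ∈ range (g.degree + 1), p ^ j) * 1 := by omega
    _ ≤ _ := Nat.mul_le_mul_left _ (hu i)

variable [Finite σ] [CommSemiring R]

noncomputable def socleExp (σ : Type*) [Finite σ] (p : ℕ) : σ →₀ ℕ :=
  Finsupp.equivFunOnFinite.symm fun _ => p - 1

lemma exists_eq_smul_add_socleExp {p : ℕ} {a : σ →₀ ℕ} (h : ∀ i, p ∣ a i + 1) :
    ∃ c : σ →₀ ℕ, a = p • c + socleExp σ p := by
  choose k hk using h
  refine ⟨Finsupp.equivFunOnFinite.symm fun i => k i - 1, Finsupp.ext fun i => ?_⟩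
  have hki : k i ≠ 0 := fun h0 => by simpa [h0] using hk i
  obtain ⟨j, hj⟩ := Nat.exists_eq_add_one_of_ne_zero hki
  have := hk i
  simp only [socleExp, Finsupp.add_apply, Finsupp.smul_apply, smul_eq_mul,
    Finsupp.coe_equivFunOnFinite_symm, hj, Nat.add_sub_cancel]
  rw [hj, mul_add_one] at this
  have hp : 0 < p := Nat.pos_of_dvd_of_pos ⟨k i, hk i⟩ (Nat.succ_pos _)
  omega

lemma single_add_socleExp_sub_single {p s : ℕ} (hs : s ≤ p - 1) (i : σ) :
    Finsupp.single i s + (socleExp σ p - Finsupp.single i s) = socleExp σ p :=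
  add_tsub_cancel_of_le fun j => by
    classical
    simp only [socleExp, Finsupp.coe_equivFunOnFinite_symm, Finsupp.single_apply]
    split <;> omega

lemma one_le_socleExp_sub_single {p s : ℕ} (hs : s ≤ p - 2) (hp : 2 ≤ p) (i j : σ) :
    1 ≤ (socleExp σ p - Finsupp.single i s) j := by
  classical
  simp only [socleExp, Finsupp.tsub_apply, Finsupp.coe_equivFunOnFinite_symm,
    Finsupp.single_apply]
  split <;> omega

structure IsCartierOperator (p : ℕ) (κ : MvPolynomial σ R →ₗ[R] MvPolynomial σ R) : Prop where
  map_monomial_smul_add_socleExp (c : σ →₀ ℕ) :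
    κ (monomial (p • c + socleExp σ p) 1) = monomial c 1
  map_monomial_of_not_dvd (a : σ →₀ ℕ) (ha : ¬ ∀ i, p ∣ a i + 1) : κ (monomial a 1) = 0

namespace IsCartierOperator

variable {p : ℕ} {κ : MvPolynomial σ R →ₗ[R] MvPolynomial σ R}

lemma of_map_monomial (hp : 0 < p) [∀ a : σ →₀ ℕ, Decidable (∀ i, p ∣ a i + 1)]
    (hκ : ∀ a : σ →₀ ℕ, κ (monomial a 1) =
      if ∀ i : σ, p ∣ (a i + 1) then
        monomial (Finsupp.equivFunOnFinite.symm fun i => (a i + 1) / p - 1) 1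
      else 0) :
    IsCartierOperator p κ where
  map_monomial_smul_add_socleExp c := by
    have hdigit : ∀ i, (p • c + socleExp σ p) i + 1 = p * (c i + 1) := fun i => by
      simp only [socleExp, Finsupp.add_apply, Finsupp.smul_apply, smul_eq_mul,
        Finsupp.coe_equivFunOnFinite_symm]
      rw [mul_add_one]
      omega
    rw [hκ, if_pos fun i => hdigit i ▸ dvd_mul_right p _]
    refine congrArg (monomial · 1) (Finsupp.ext fun i => ?_)
    rw [Finsupp.coe_equivFunOnFinite_symm, hdigit, Nat.mul_div_cancel_left _ hp,
      Nat.add_sub_cancel]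
  map_monomial_of_not_dvd a ha := by rw [hκ, if_neg ha]

lemma map_monomial_smul_mul (hκ : IsCartierOperator p κ) (c : σ →₀ ℕ) (f : MvPolynomial σ R) :
    κ (monomial (p • c) 1 * f) = monomial c 1 * κ f := by
  suffices κ ∘ₗ LinearMap.mulLeft R (monomial (p • c) 1) =
      LinearMap.mulLeft R (monomial c 1) ∘ₗ κ from LinearMap.congr_fun this f
  refine linearMap_ext fun a => LinearMap.ext_ring ?_
  simp only [LinearMap.coe_comp, Function.comp_apply, LinearMap.mulLeft_apply, monomial_mul,
    one_mul]
  by_cases ha : ∀ i, p ∣ a i + 1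
  · obtain ⟨d, rfl⟩ := exists_eq_smul_add_socleExp ha
    rw [← add_assoc, ← smul_add, hκ.map_monomial_smul_add_socleExp,
      hκ.map_monomial_smul_add_socleExp, monomial_mul, one_mul]
  · have hca : ¬ ∀ i, p ∣ (p • c + a) i + 1 := by
      simpa [add_assoc, Nat.dvd_add_right (dvd_mul_right p _)] using ha
    rw [hκ.map_monomial_of_not_dvd _ ha, hκ.map_monomial_of_not_dvd _ hca, mul_zero]

lemma map_X_pow_mul (hκ : IsCartierOperator p κ) (i : σ) (f : MvPolynomial σ R) :
    κ (X i ^ p * f) = X i * κ f := by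
  rw [X_pow_eq_monomial, ← pow_one (X i), X_pow_eq_monomial]
  simpa [Finsupp.smul_single] using hκ.map_monomial_smul_mul (Finsupp.single i 1) f

lemma iterate_map_monomial_mul_geomSum_smul (hκ : IsCartierOperator p κ)
    {t u : σ →₀ ℕ} (htu : t + u = socleExp σ p) (e : ℕ) :
    (fun q => κ (monomial t 1 * q))^[e] (monomial ((∑ j ∈ range e, p ^ j) • u) 1) = 1 := by
  induction e with
  | zero => simp
  | succ e ih =>
    have hstep : t + (∑ j ∈ range (e + 1), p ^ j) • u =
        p • (∑ j ∈ range e, p ^ j) • u + socleExp σ p := by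
      rw [geom_sum_succ, add_smul, one_smul, mul_smul, ← htu]
      abel
    rw [Function.iterate_succ_apply, monomial_mul, one_mul, hstep,
      hκ.map_monomial_smul_add_socleExp, ih]

end IsCartierOperator

/-- For the Cartier operator `κ` on `𝔽_p[x₁,…,x_n]` and `0 ≤ s ≤ p-2`, the twist
`κ_s(q) = κ(x₁^s q)` is "strongly surjective": for every monomial `x^g` there are
`e ≥ 1` and a monomial `x^b` with `κ_s^e(x^b · x^g) = 1`.  In contrast, for
`s = p-1` one has `κ_{p-1}^e(R·x₁) ⊆ x₁·R` for all `e`. -/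
theorem stmt_19 (p n : ℕ) (hp : p.Prime) (hn : 0 < n) (s : ℕ) (hs : s ≤ p - 2)
    (κ : MvPolynomial (Fin n) (ZMod p) →ₗ[ZMod p] MvPolynomial (Fin n) (ZMod p))
    (hκ : ∀ a : Fin n →₀ ℕ, κ (monomial a 1) =
      if ∀ i : Fin n, p ∣ (a i + 1) then
        monomial (Finsupp.equivFunOnFinite.symm fun i => (a i + 1) / p - 1) 1
      else 0) :
    (∀ g : Fin n →₀ ℕ, ∃ e : ℕ, 1 ≤ e ∧ ∃ b : Fin n →₀ ℕ,
      (fun q => κ ((X (⟨0, hn⟩ : Fin n)) ^ s * q))^[e]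
        (monomial b 1 * monomial g 1) = 1) ∧
    (∀ (e : ℕ) (f : MvPolynomial (Fin n) (ZMod p)),
      (fun q => κ ((X (⟨0, hn⟩ : Fin n)) ^ (p - 1) * q))^[e]
          (f * X (⟨0, hn⟩ : Fin n)) ∈
        Ideal.span {(X (⟨0, hn⟩ : Fin n) : MvPolynomial (Fin n) (ZMod p))}) := by
  set i₀ : Fin n := ⟨0, hn⟩
  have hκ' := IsCartierOperator.of_map_monomial hp.pos hκ
  refine ⟨fun g => ?_, fun e f => ?_⟩
  · set u := socleExp (Fin n) p - Finsupp.single i₀ s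
    have hu : ∀ i, 1 ≤ u i := one_le_socleExp_sub_single hs hp.two_le i₀
    have hsu : Finsupp.single i₀ s + u = socleExp (Fin n) p :=
      single_add_socleExp_sub_single (by omega) i₀
    refine ⟨g.degree + 1, le_add_self, (∑ j ∈ range (g.degree + 1), p ^ j) • u - g, ?_⟩
    simp only [X_pow_eq_monomial]
    rw [monomial_mul, one_mul, tsub_add_cancel_of_le (le_geomSum_smul hp.pos hu g)]
    exact hκ'.iterate_map_monomial_mul_geomSum_smul hsu _
  · set I : Ideal (MvPolynomial (Fin n) (ZMod p)) := Ideal.span {X i₀}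
    have hmaps : Set.MapsTo (fun q => κ (X i₀ ^ (p - 1) * q)) I I := by
      intro q hq
      obtain ⟨h, rfl⟩ := Ideal.mem_span_singleton'.mp hq
      dsimp only
      rw [mul_comm h, ← mul_assoc, ← pow_succ, Nat.sub_add_cancel hp.one_le, hκ'.map_X_pow_mul]
      exact I.mul_mem_right _ (Ideal.mem_span_singleton_self _)
    exact hmaps.iterate e (Ideal.mem_span_singleton'.mpr ⟨f, rfl⟩)
end
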